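/- Let (R, 𝔪) be a local commutative artinian principal ideal ring of length n as a module over itself, M a finitely generated R-module, and ⟨,⟩ : M × M → R a non-degenerate symmetric R-bilinear form. Let x ∈ M with Ann_R(x) = 𝔪^s. Then for every r' ∈ 𝔪^{n-s} there exists y ∈ M with ⟨x, y⟩ = r'. -/
import Mathlib


open IsLocalRing Ideal

section Aux
variable {R : Type*} [CommRing R] [IsLocalRing R] [IsArtinianRing R] [IsPrincipalIdealRing R]

/-- every ideal is a power of the maximal ideal -/
lemma aux_ideal_eq_pow (I : Ideal R) : ∃ k : ℕ, I = maximalIdeal R ^ k := by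
  obtain ⟨N, hN⟩ : ∃ N, maximalIdeal R ^ N = ⊥ := by
    have h := IsArtinianRing.isNilpotent_jacobson_bot (R := R)
    rcases subsingleton_or_nontrivial R with h' | h'
    · exact ⟨0, Subsingleton.elim _ _⟩
    · rw [jacobson_eq_maximalIdeal ⊥ bot_ne_top] at h
      exact h
  classical
  rcases eq_or_ne I ⊤ with hI | hI
  · exact ⟨0, by simp [hI]⟩
  obtain ⟨a, ha⟩ := (IsPrincipalIdealRing.principal I).principal
  rcases eq_or_ne a 0 with rfl | ha0
  · exact ⟨N, by simp [ha, hN, Ideal.span_singleton_eq_bot.mpr rfl]⟩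
  have hP : ∃ m, a ∉ maximalIdeal R ^ m := ⟨N, by simp [hN, ha0]⟩
  set k := Nat.find hP with hk
  have hk0 : k ≠ 0 := by
    intro h
    have := Nat.find_spec hP
    rw [← hk, h] at this
    simp at this
  have hmem : a ∈ maximalIdeal R ^ (k - 1) := by
    by_contra h
    have := Nat.find_min' hP h
    omega
  have hnmem : a ∉ maximalIdeal R ^ k := Nat.find_spec hP
  obtain ⟨π, hπ⟩ := (IsPrincipalIdealRing.principal (maximalIdeal R)).principal
  refine ⟨k - 1, ?_⟩
  rw [hπ, Ideal.submodule_span_eq, Ideal.span_singleton_pow] at hmem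
  rw [ha, hπ]
  simp only [Ideal.submodule_span_eq]
  rw [Ideal.span_singleton_pow]
  obtain ⟨c, hc⟩ := Ideal.mem_span_singleton.mp hmem
  have hcu : IsUnit c := by
    by_contra hcu
    apply hnmem
    rw [hπ, Ideal.submodule_span_eq, Ideal.span_singleton_pow, Ideal.mem_span_singleton]
    have : k = (k-1) + 1 := by omega
    rw [this, pow_succ]
    have hcm : c ∈ Ideal.span {π} := by
      rw [← Ideal.submodule_span_eq, ← hπ]
      exact (IsLocalRing.mem_maximalIdeal c).mpr hcu
    obtain ⟨d, hd⟩ := Ideal.mem_span_singleton.mp hcm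
    exact ⟨d, by rw [hc, hd]; ring⟩
  rw [hc, mul_comm]
  exact Ideal.span_singleton_mul_left_unit hcu _

lemma aux_strict {n : ℕ} (hne : maximalIdeal R ^ (n - 1) ≠ ⊥) :
    ∀ j < n, maximalIdeal R ^ (j + 1) < maximalIdeal R ^ j := by
  intro j hj
  refine lt_of_le_of_ne (Ideal.pow_le_pow_right (by omega)) ?_
  intro h
  have hfg : (maximalIdeal R ^ j).FG := (IsPrincipalIdealRing.principal _).fg
  have hnt : Nontrivial R := by
    rcases subsingleton_or_nontrivial R with h' | h'
    · exact absurd (Subsingleton.elim _ _) hne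
    · exact h'
  have hbot : maximalIdeal R ^ j = ⊥ := by
    refine Submodule.eq_bot_of_le_smul_of_le_jacobson_bot (maximalIdeal R) _ hfg ?_ ?_
    · rw [smul_eq_mul, ← pow_succ']
      exact le_of_eq h.symm
    · rw [jacobson_eq_maximalIdeal ⊥ bot_ne_top]
  exact hne (le_bot_iff.mp (hbot ▸ Ideal.pow_le_pow_right (by omega)))

end Aux

lemma aux_nilpIndex (R : Type*) [CommRing R] [IsLocalRing R] [IsArtinianRing R]
    [IsPrincipalIdealRing R] [Nontrivial R] (n : ℕ)
    (hn : Order.krullDim (Submodule R R) = (n : WithBot ℕ∞)) :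
    maximalIdeal R ^ n = ⊥ ∧ maximalIdeal R ^ (n - 1) ≠ ⊥ ∧ 1 ≤ n := by
  classical
  have hex : ∃ m, maximalIdeal R ^ m = ⊥ := by
    have h := IsArtinianRing.isNilpotent_jacobson_bot (R := R)
    rw [jacobson_eq_maximalIdeal ⊥ bot_ne_top] at h
    exact h
  set k := Nat.find hex with hkdef
  have hk : maximalIdeal R ^ k = ⊥ := Nat.find_spec hex
  have hk' : ∀ j < k, maximalIdeal R ^ j ≠ ⊥ := by
    intro j hj
    rw [hkdef] at hj
    exact Nat.find_min hex hj
  have hk1 : k ≠ 0 := by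
    intro h
    rw [h, pow_zero, Ideal.one_eq_top] at hk
    have h1 : (1 : R) ∈ (⊥ : Ideal R) := hk ▸ Submodule.mem_top
    rw [Submodule.mem_bot] at h1
    exact one_ne_zero h1
  have hstrict := aux_strict (R := R) (n := k) (hk' (k - 1) (by omega))
  -- lower bound: k ≤ n
  have hle1 : k ≤ n := by
    let p : LTSeries (Submodule R R) :=
      { length := k
        toFun := fun i => maximalIdeal R ^ (k - (i : ℕ))
        step := fun i => by
          have h1 : (i : ℕ) < k := i.isLt
          have e1 : k - ((i : ℕ) + 1) + 1 = k - (i : ℕ) := by omega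
          have h2 := hstrict (k - ((i : ℕ) + 1)) (by omega)
          rw [e1] at h2
          simpa using h2 }
    have := Order.LTSeries.length_le_krullDim p
    rw [hn] at this
    exact_mod_cast this
  -- upper bound: n ≤ k
  have hle2 : n ≤ k := by
    have hkd : Order.krullDim (Submodule R R) ≤ (k : WithBot ℕ∞) := by
      rw [Order.krullDim_eq_iSup_length]
      have hcast : ((k : ℕ∞) : WithBot ℕ∞) = (k : WithBot ℕ∞) := rfl
      rw [← hcast, WithBot.coe_le_coe]
      refine iSup_le fun p => ?_
      have he : ∀ i : Fin (p.length + 1), ∃ e : ℕ, e ≤ k ∧ p.toFun i = maximalIdeal R ^ e := by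
        intro i
        obtain ⟨e, hee⟩ := aux_ideal_eq_pow (p.toFun i)
        refine ⟨min e k, min_le_right _ _, ?_⟩
        rcases le_total e k with h | h
        · rw [min_eq_left h]; exact hee
        · rw [min_eq_right h, hee]
          have h1 : maximalIdeal R ^ e ≤ ⊥ := hk ▸ Ideal.pow_le_pow_right h
          rw [le_bot_iff.mp h1, hk]
      choose e hek hpe using he
      have hanti : ∀ i j : Fin (p.length + 1), i < j → e j < e i := by
        intro i j hij
        by_contra h
        have hle : p.toFun j ≤ p.toFun i := by
          rw [hpe i, hpe j]
          exact Ideal.pow_le_pow_right (by omega)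
        exact absurd (p.strictMono hij) (not_lt_of_ge hle)
      let f : Fin (p.length + 1) → Fin (k + 1) :=
        fun i => ⟨k - e i, by have := hek i; omega⟩
      have hfinj : Function.Injective f := by
        intro i j hij
        rcases lt_trichotomy i j with h | h | h
        · have h1 := hanti i j h
          have h2 := hek i
          have h3 := hek j
          apply_fun Fin.val at hij
          simp only [f] at hij
          omega
        · exact h
        · have h1 := hanti j i h
          have h2 := hek i
          have h3 := hek j
          apply_fun Fin.val at hij
          simp only [f] at hij
          omega
      have hcard := Fintype.card_le_of_injective f hfinj
      simp only [Fintype.card_fin] at hcard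
      exact_mod_cast Nat.lt_succ_iff.mp (Nat.lt_of_lt_of_le (Nat.lt_succ_self _) hcard)
    rw [hn] at hkd
    exact_mod_cast hkd
  have hkn : k = n := le_antisymm hle1 hle2
  refine ⟨?_, ?_, by omega⟩
  · rw [← hkn]; exact hk
  · have : k - 1 = n - 1 := by omega
    rw [← this]
    exact hk' (k - 1) (by omega)

/-- Let `(R, 𝔪)` be a local commutative artinian principal ideal ring of length `n` as a
module over itself (length expressed as the Krull dimension of its lattice of ideals), `M` a
finitely generated `R`-module, and `⟨,⟩ : M × M → R` a non-degenerate symmetric bilinear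
form.  Let `x ∈ M` with `Ann_R(x) = 𝔪^s`.  Then for every `r' ∈ 𝔪^(n-s)` there exists
`y ∈ M` with `⟨x, y⟩ = r'`. -/
theorem exists_pairing_eq (R M : Type*) [CommRing R] [IsLocalRing R]
    [IsArtinianRing R] [IsPrincipalIdealRing R] [AddCommGroup M] [Module R M]
    [Module.Finite R M]
    (n : ℕ) (hn : Order.krullDim (Submodule R R) = (n : WithBot ℕ∞))
    (B : M →ₗ[R] M →ₗ[R] R) (hB : ∀ x y, B x y = B y x) (hBnd : Function.Bijective B)
    (x : M) (s : ℕ)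
    (hx : LinearMap.ker (LinearMap.toSpanSingleton R M x) = IsLocalRing.maximalIdeal R ^ s) :
    ∀ r' ∈ IsLocalRing.maximalIdeal R ^ (n - s), ∃ y : M, B x y = r' := by
  intro r' hr'
  rcases subsingleton_or_nontrivial R with hR | hR
  · exact ⟨0, Subsingleton.elim _ _⟩
  obtain ⟨hbot, hnbot, hn1⟩ := aux_nilpIndex R n hn
  obtain ⟨t0, ht0⟩ := aux_ideal_eq_pow (LinearMap.range (B x))
  set t := min t0 n with htdef
  have ht : LinearMap.range (B x) = maximalIdeal R ^ t := by
    rcases le_total t0 n with h | h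
    · rw [htdef, min_eq_left h]; exact ht0
    · rw [htdef, min_eq_right h, ht0]
      have h1 : maximalIdeal R ^ t0 ≤ ⊥ := hbot ▸ Ideal.pow_le_pow_right h
      rw [le_bot_iff.mp h1, hbot]
  have htn : t ≤ n := min_le_right _ _
  have hsub : maximalIdeal R ^ (n - t) ≤ maximalIdeal R ^ s := by
    rw [← hx]
    intro r hr
    rw [LinearMap.mem_ker, LinearMap.toSpanSingleton_apply]
    apply hBnd.injective
    rw [map_zero, map_smul]
    ext m
    have hm : B x m ∈ maximalIdeal R ^ t := ht ▸ LinearMap.mem_range_self _ m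
    have hmul : r * B x m ∈ maximalIdeal R ^ (n - t) * maximalIdeal R ^ t :=
      Ideal.mul_mem_mul hr hm
    rw [← pow_add, Nat.sub_add_cancel htn, hbot] at hmul
    simp only [LinearMap.smul_apply, LinearMap.zero_apply, smul_eq_mul]
    exact (Submodule.mem_bot R).mp hmul
  rcases Nat.eq_zero_or_pos t with htz | htz
  · have hmem : r' ∈ LinearMap.range (B x) := by
      rw [ht, htz, pow_zero, Ideal.one_eq_top]
      trivial
    obtain ⟨y, hy⟩ := hmem
    exact ⟨y, hy⟩
  · have hst : s ≤ n - t := by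
      by_contra h
      push_neg at h
      have h1 : maximalIdeal R ^ s ≤ maximalIdeal R ^ (n - t + 1) :=
        Ideal.pow_le_pow_right (by omega)
      have h2 := aux_strict (R := R) (n := n) hnbot (n - t) (by omega)
      exact absurd (hsub.trans h1) (not_le_of_gt h2)
    have hle : maximalIdeal R ^ (n - s) ≤ LinearMap.range (B x) := by
      rw [ht]
      exact Ideal.pow_le_pow_right (by omega)
    obtain ⟨y, hy⟩ := hle hr'
    exact ⟨y, hy⟩
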